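/- Exponential stability transfer: under the hypotheses of the main transfer theorem with f globally Lipschitz in the second argument with constant L uniformly in the first, if the system is (W, H)-globally exponentially stable with constants C₀, κ > 0 (i.e., ‖x(t)‖ ≤ C₀ e^{−κt}‖x_0‖_W for x_0 ∈ W), then it is (C⁰, H)-globally exponentially stable: for every continuous x_0 and ζ ∈ H, ‖x(t)‖ ≤ C̃₀ e^{−κ t} ‖x_0‖_∞ for all t ≥ 0, with C̃₀ = max((1 + e^{L h_M}) e^{κ h_M}, C₀ e^{κ h_M} (1 + e^{L h_M}) √(1 + h_M L²)). -/

import Mathlib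

open MeasureTheory Real Set intervalIntegral

/-- Sup norm of a function over the delay window `[-h_M, 0]`. -/
noncomputable def segSup {n : ℕ} (hM : ℝ) (φ : ℝ → EuclideanSpace ℝ (Fin n)) : ℝ :=
  ⨆ τ : Set.Icc (-hM) (0:ℝ), ‖φ τ‖

/-- The segment `x_t = x(t + ·)`. -/
def seg {n : ℕ} (x : ℝ → EuclideanSpace ℝ (Fin n)) (t : ℝ) :
    ℝ → EuclideanSpace ℝ (Fin n) := fun τ => x (t + τ)

/-- Global solution of the retarded equation `ẋ(t) = f(ζ(t), x_t)` on `ℝ₊` with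
initial condition `x₀` on `[-h_M, 0]`. -/
def IsSolution {n r : ℕ} (hM : ℝ)
    (f : (Fin r → ℝ) → (ℝ → EuclideanSpace ℝ (Fin n)) → EuclideanSpace ℝ (Fin n))
    (ζ : ℝ → Fin r → ℝ) (x₀ x : ℝ → EuclideanSpace ℝ (Fin n)) : Prop :=
  ContinuousOn x (Set.Ici (-hM)) ∧
  (∀ τ ∈ Set.Icc (-hM) (0:ℝ), x τ = x₀ τ) ∧
  ∀ t ≥ (0:ℝ), HasDerivWithinAt x (f (ζ t) (seg x t)) (Set.Ici t) t

/-- `x₀` is in `W`, with weak derivative `g`. -/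
def InW {n : ℕ} (hM : ℝ) (x₀ g : ℝ → EuclideanSpace ℝ (Fin n)) : Prop :=
  ContinuousOn x₀ (Set.Icc (-hM) 0) ∧
  MeasureTheory.IntegrableOn g (Set.Icc (-hM) 0) ∧
  (∀ t ∈ Set.Icc (-hM) (0:ℝ), x₀ 0 - x₀ t = ∫ s in t..0, g s) ∧
  MeasureTheory.IntegrableOn (fun s => ‖g s‖ ^ 2) (Set.Icc (-hM) 0)

/-- The `W`-norm of `x₀ ∈ W` with weak derivative `g`. -/
noncomputable def Wnorm {n : ℕ} (hM : ℝ) (x₀ g : ℝ → EuclideanSpace ℝ (Fin n)) : ℝ :=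
  Real.sqrt (‖x₀ 0‖ ^ 2 + ∫ s in (-hM)..0, ‖g s‖ ^ 2)

/-- Class `K` comparison function. -/
def ClassK (α : ℝ → ℝ) : Prop :=
  ContinuousOn α (Set.Ici 0) ∧ StrictMonoOn α (Set.Ici 0) ∧ α 0 = 0

/-- Forward invariance of a set of input signals. -/
def FwdInv {r : ℕ} (H : Set (ℝ → Fin r → ℝ)) : Prop :=
  ∀ ζ ∈ H, ∀ a > (0:ℝ), (fun t => ζ (t + a)) ∈ H

/-
On the initial layer `[0, h_M]`, a Grönwall argument for the delay equation (the derivative is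
bounded by `L` times the sup over the history window) gives `‖x(t)‖ ≤ e^{L h_M} ‖x₀‖_∞`. The
segment `x_{h_M}` then lies in `W`, with derivative `s ↦ f(ζ(s), x_s)` bounded by
`L e^{L h_M} ‖x₀‖_∞`, so its `W`-norm is at most `e^{L h_M} √(1 + h_M L²) ‖x₀‖_∞`. Since
`x(· + h_M)` solves the system driven by `ζ(· + h_M) ∈ H`, the `W`-estimate takes over from time
`h_M` on.

Existence for merely continuous `x₀` comes from approximating `x₀` uniformly by polynomial data,
which lie in `W`: by the same Grönwall estimate the corresponding solutions converge locally
uniformly, and the limit satisfies the integral form of the equation.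
-/

open Filter

lemma lt_of_forall_Ico_lt_imp_lt {φ ψ : ℝ → ℝ} {a b : ℝ} (hφ : ContinuousOn φ (Icc a b))
    (hψ : ContinuousOn ψ (Icc a b))
    (step : ∀ t ∈ Icc a b, (∀ s ∈ Ico a t, φ s < ψ s) → φ t < ψ t) :
    ∀ t ∈ Icc a b, φ t < ψ t := by
  by_contra! h
  obtain ⟨t, ht, hle⟩ := h
  set S := {s ∈ Icc a b | ψ s ≤ φ s}
  have hS : IsClosed S := isClosed_Icc.isClosed_le hψ hφ
  have hSbdd : BddBelow S := ⟨a, fun s hs => hs.1.1⟩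
  have hS₀ : sInf S ∈ S := hS.csInf_mem ⟨t, ht, hle⟩ hSbdd
  refine (step _ hS₀.1 fun s hs => ?_).not_ge hS₀.2
  by_contra! hs'
  have hsS : s ∈ S := ⟨⟨hs.1, hs.2.le.trans hS₀.1.2⟩, hs'⟩
  exact (csInf_le hSbdd hsS).not_gt hs.2

theorem exists_contDiff_near_of_continuousOn {F : Type*} [NormedAddCommGroup F] [NormedSpace ℝ F]
    [FiniteDimensional ℝ F] {a b : ℝ} {φ : ℝ → F} (hφ : ContinuousOn φ (Icc a b)) {ε : ℝ}
    (hε : 0 < ε) : ∃ p : ℝ → F, ContDiff ℝ ⊤ p ∧ ∀ t ∈ Icc a b, ‖p t - φ t‖ < ε := by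
  let e := Module.finBasis ℝ F
  set C := ∑ i, ‖e i‖ + 1
  have hC : 0 < C := by positivity
  have hcoord : ∀ i, ∃ P : Polynomial ℝ, ∀ t ∈ Icc a b, |P.eval t - e.repr (φ t) i| < ε / C :=
    fun i => exists_polynomial_near_of_continuousOn a b _
      ((e.coord i).continuous_of_finiteDimensional.comp_continuousOn hφ) _ (by positivity)
  choose P hP using hcoord
  refine ⟨fun t => ∑ i, Polynomial.aeval t (P i) • e i, ?_, fun t ht => ?_⟩
  · exact ContDiff.sum fun i _ => (Polynomial.contDiff_aeval _ _).smul contDiff_const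
  calc ‖∑ i, Polynomial.aeval t (P i) • e i - φ t‖
      = ‖∑ i, ((P i).eval t - e.repr (φ t) i) • e i‖ := by
        conv_lhs => rw [← e.sum_repr (φ t)]
        simp [sub_smul]
    _ ≤ ∑ i, ε / C * ‖e i‖ := by
        refine norm_sum_le_of_le _ fun i _ => ?_
        rw [norm_smul, Real.norm_eq_abs]
        gcongr
        exact (hP i t ht).le
    _ < ε := by
        rw [← Finset.mul_sum, div_mul_eq_mul_div, div_lt_iff₀ hC]
        linarith

lemma UniformCauchySeqOn.of_dist_le_mul {ι α β γ δ : Type*} [Nonempty ι] [SemilatticeSup ι]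
    [PseudoMetricSpace β] [PseudoMetricSpace δ] {F : ι → α → β} {G : ι → γ → δ} {s : Set α}
    {t : Set γ} (hF : UniformCauchySeqOn F atTop s) {C : ℝ}
    (h : ∀ k l (ε : ℝ), (∀ x ∈ s, dist (F k x) (F l x) ≤ ε) →
      ∀ y ∈ t, dist (G k y) (G l y) ≤ C * ε) :
    UniformCauchySeqOn G atTop t := by
  rw [Metric.uniformCauchySeqOn_iff] at hF ⊢
  intro ε hε
  obtain ⟨N, hN⟩ := hF (ε / (|C| + 1)) (by positivity)
  refine ⟨N, fun k hk l hl y hy => (h k l _ (fun x hx => (hN k hk l hl x hx).le) y hy).trans_lt ?_⟩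
  calc C * (ε / (|C| + 1)) ≤ |C| * (ε / (|C| + 1)) := by gcongr; exact le_abs_self C
    _ < ε := by
      rw [mul_div_assoc', div_lt_iff₀ (by positivity)]
      nlinarith [abs_nonneg C]

lemma norm_le_max_mul_exp_of_delay_bounds {F : Type*} [NormedAddCommGroup F] {y : ℝ → F}
    {hM L C₀ κ B W : ℝ} (hC₀ : 0 ≤ C₀) (hκ : 0 ≤ κ) (hB : 0 ≤ B)
    (hinit : ∀ t ∈ Icc 0 hM, ‖y t‖ ≤ B * exp (L * hM))
    (hlate : ∀ t ≥ 0, ‖y (t + hM)‖ ≤ C₀ * exp (-κ * t) * W)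
    (hW : W ≤ exp (L * hM) * B * √(1 + hM * L ^ 2)) :
    ∀ t ≥ 0, ‖y t‖ ≤ max ((1 + exp (L * hM)) * exp (κ * hM))
        (C₀ * exp (κ * hM) * (1 + exp (L * hM)) * √(1 + hM * L ^ 2)) * exp (-κ * t) * B := by
  intro t ht
  rcases le_or_gt t hM with htM | htM
  · have hdecay : 1 ≤ exp (κ * hM) * exp (-κ * t) := by
      rw [← exp_add]; exact one_le_exp (by nlinarith)
    calc ‖y t‖ ≤ B * exp (L * hM) := hinit t ⟨ht, htM⟩
      _ ≤ B * ((1 + exp (L * hM)) * (exp (κ * hM) * exp (-κ * t))) := by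
        gcongr
        nlinarith [exp_pos (L * hM)]
      _ ≤ max ((1 + exp (L * hM)) * exp (κ * hM))
          (C₀ * exp (κ * hM) * (1 + exp (L * hM)) * √(1 + hM * L ^ 2)) * exp (-κ * t) * B := by
        rw [mul_comm B, ← mul_assoc]
        gcongr
        exact le_max_left _ _
  · calc ‖y t‖ = ‖y (t - hM + hM)‖ := by rw [sub_add_cancel]
      _ ≤ C₀ * exp (-κ * (t - hM)) * W := hlate _ (by linarith)
      _ ≤ C₀ * exp (-κ * (t - hM)) * (exp (L * hM) * B * √(1 + hM * L ^ 2)) := by gcongr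
      _ ≤ C₀ * exp (κ * hM) * (1 + exp (L * hM)) * √(1 + hM * L ^ 2) * exp (-κ * t) * B := by
        rw [show -κ * (t - hM) = κ * hM + -κ * t by ring, exp_add]
        calc _ = C₀ * exp (κ * hM) * √(1 + hM * L ^ 2) * exp (-κ * t) * B * exp (L * hM) := by
              ring
          _ ≤ C₀ * exp (κ * hM) * √(1 + hM * L ^ 2) * exp (-κ * t) * B * (1 + exp (L * hM)) := by
              gcongr
              linarith
          _ = _ := by ring
      _ ≤ _ := by gcongr; exact le_max_right _ _

section

variable {n r : ℕ}

local notation "E" => EuclideanSpace ℝ (Fin n)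

lemma segSup_nonneg (hM : ℝ) (φ : ℝ → E) : 0 ≤ segSup hM φ :=
  Real.iSup_nonneg fun _ => norm_nonneg _

lemma le_segSup {hM : ℝ} {φ : ℝ → E} (hφ : ContinuousOn φ (Icc (-hM) 0))
    {τ : ℝ} (hτ : τ ∈ Icc (-hM) 0) : ‖φ τ‖ ≤ segSup hM φ := by
  have hbdd := (isCompact_Icc.image_of_continuousOn hφ.norm).bddAbove
  rw [image_eq_range] at hbdd
  exact le_ciSup hbdd ⟨τ, hτ⟩

lemma segSup_le {hM M : ℝ} {φ : ℝ → E} (hM₀ : 0 ≤ M)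
    (h : ∀ τ ∈ Icc (-hM) 0, ‖φ τ‖ ≤ M) : segSup hM φ ≤ M :=
  Real.iSup_le (fun τ => h τ τ.2) hM₀

lemma norm_le_mul_exp_of_norm_deriv_le_segSup {hM L B : ℝ} (hL : 0 ≤ L) {y G : ℝ → E}
    (hy : ContinuousOn y (Ici (-hM)))
    (hd : ∀ t ≥ 0, HasDerivWithinAt y (G t) (Ici t) t)
    (hG : ∀ t ≥ 0, ‖G t‖ ≤ L * segSup hM (seg y t))
    (h₀ : ∀ τ ∈ Icc (-hM) 0, ‖y τ‖ ≤ B) (hhM : 0 ≤ hM) :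
    ∀ t ≥ 0, ‖y t‖ ≤ B * exp (L * t) := by
  have hB : ‖y 0‖ ≤ B := h₀ 0 ⟨by linarith, le_rfl⟩
  have hB₀ : 0 ≤ B := (norm_nonneg _).trans hB
  have hyIcc : ∀ T, ContinuousOn y (Icc 0 T) :=
    fun T => hy.mono fun s hs => (show -hM ≤ s by linarith [hs.1])
  -- with `B + ε` in place of `B` the bound is strict, so it cannot fail at a first time
  have strict : ∀ ε > 0, ∀ T, ∀ t ∈ Icc 0 T, ‖y t‖ < (B + ε) * exp (L * t) := by
    intro ε hε T
    refine lt_of_forall_Ico_lt_imp_lt (hyIcc T).norm (by fun_prop) fun t ht hlt => ?_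
    have hwin : ∀ s ∈ Ico 0 t, ‖G s‖ ≤ (B + ε) * exp (L * s) * L := by
      intro s hs
      refine (hG s hs.1).trans ?_
      rw [mul_comm _ L]
      refine mul_le_mul_of_nonneg_left (segSup_le (by positivity) fun τ hτ => ?_) hL
      rcases le_or_gt (s + τ) 0 with hτ₀ | hτ₀
      · calc ‖y (s + τ)‖ ≤ B := h₀ _ ⟨by linarith [hτ.1, hs.1], hτ₀⟩
          _ ≤ (B + ε) * exp (L * s) := by
            nlinarith [one_le_exp (mul_nonneg hL hs.1)]
      · calc ‖y (s + τ)‖ ≤ (B + ε) * exp (L * (s + τ)) :=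
              (hlt _ ⟨hτ₀.le, by linarith [hτ.2, hs.2]⟩).le
          _ ≤ (B + ε) * exp (L * s) := by
            gcongr
            nlinarith [hτ.2]
    have hfence := image_norm_le_of_norm_deriv_right_le_deriv_boundary (hyIcc t)
      (fun s hs => hd s hs.1) (B := fun s => (B + ε) * exp (L * s) - ε)
      (by simpa using hB) (fun s => ?_) hwin ⟨ht.1, le_rfl⟩
    · linarith
    · simpa [mul_assoc] using (((hasDerivAt_id s).const_mul L).exp.const_mul (B + ε)).sub_const ε
  intro t ht
  refine le_of_forall_pos_le_add fun δ hδ => ?_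
  have := strict (δ / exp (L * t)) (by positivity) t t ⟨ht, le_rfl⟩
  rw [add_mul, div_mul_cancel₀ _ (exp_pos _).ne'] at this
  exact this.le

lemma norm_le_mul_exp_on_Icc_of_norm_deriv_le_segSup {hM L B : ℝ} (hL : 0 ≤ L) {y G : ℝ → E}
    (hy : ContinuousOn y (Ici (-hM)))
    (hd : ∀ t ≥ 0, HasDerivWithinAt y (G t) (Ici t) t)
    (hG : ∀ t ≥ 0, ‖G t‖ ≤ L * segSup hM (seg y t))
    (h₀ : ∀ τ ∈ Icc (-hM) 0, ‖y τ‖ ≤ B) (hhM : 0 ≤ hM) :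
    ∀ T ≥ 0, ∀ u ∈ Icc (-hM) T, ‖y u‖ ≤ B * exp (L * T) := by
  intro T hT u hu
  have hB₀ : 0 ≤ B := (norm_nonneg _).trans (h₀ 0 ⟨by linarith, le_rfl⟩)
  rcases le_or_gt u 0 with hu₀ | hu₀
  · exact (h₀ u ⟨hu.1, hu₀⟩).trans (le_mul_of_one_le_right hB₀ (one_le_exp (by positivity)))
  · calc ‖y u‖ ≤ B * exp (L * u) :=
          norm_le_mul_exp_of_norm_deriv_le_segSup hL hy hd hG h₀ hhM u hu₀.le
      _ ≤ B * exp (L * T) := by gcongr; exact hu.2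

lemma Wnorm_le {hM M K : ℝ} (hhM : 0 ≤ hM) {p g : ℝ → E} (hpg : InW hM p g) (hp : ‖p 0‖ ≤ M)
    (hg : ∀ s ∈ Icc (-hM) 0, ‖g s‖ ≤ K) : Wnorm hM p g ≤ √(M ^ 2 + hM * K ^ 2) := by
  have hint : ∫ s in (-hM)..0, ‖g s‖ ^ 2 ≤ ∫ _ in (-hM)..0, K ^ 2 := by
    refine integral_mono_on (by linarith) ?_ intervalIntegrable_const fun s hs => ?_
    · exact (intervalIntegrable_iff_integrableOn_Icc_of_le (by linarith)).2 hpg.2.2.2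
    · exact pow_le_pow_left₀ (norm_nonneg _) (hg s hs) 2
  refine sqrt_le_sqrt (add_le_add (pow_le_pow_left₀ (norm_nonneg _) hp 2) ?_)
  simpa using hint

lemma inW_of_contDiff {hM : ℝ} {p : ℝ → E} (hp : ContDiff ℝ 1 p) : InW hM p (deriv p) := by
  have hp' : Continuous (deriv p) := hp.continuous_deriv le_rfl
  refine ⟨hp.continuous.continuousOn, hp'.integrableOn_Icc, fun t _ => ?_,
    (hp'.norm.pow 2).integrableOn_Icc⟩
  rw [integral_deriv_eq_sub (fun s _ => hp.differentiable one_ne_zero s)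
    (hp'.intervalIntegrable _ _)]

lemma exists_seq_inW_tendstoUniformlyOn {hM : ℝ} {x₀ : ℝ → E}
    (hx₀ : ContinuousOn x₀ (Icc (-hM) 0)) :
    ∃ p g : ℕ → ℝ → E, (∀ k, InW hM (p k) (g k)) ∧ TendstoUniformlyOn p x₀ atTop (Icc (-hM) 0) := by
  choose p hp using fun k : ℕ =>
    exists_contDiff_near_of_continuousOn hx₀ (Nat.one_div_pos_of_nat (n := k))
  refine ⟨p, fun k => deriv (p k), fun k => inW_of_contDiff ((hp k).1.of_le le_top), ?_⟩
  rw [Metric.tendstoUniformlyOn_iff]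
  intro ε hε
  obtain ⟨N, hN⟩ := exists_nat_one_div_lt hε
  filter_upwards [eventually_ge_atTop N] with k hk t ht
  rw [dist_comm, dist_eq_norm]
  exact ((hp k).2 t ht).trans_le (Nat.one_div_le_one_div hk) |>.trans hN

def HistoryLipschitzOn (hM L : ℝ) (A : Set (Fin r → ℝ)) (f : (Fin r → ℝ) → (ℝ → E) → E) :
    Prop :=
  ∀ ξ ∈ A, ∀ φ ψ : ℝ → E, ‖f ξ φ - f ξ ψ‖ ≤ L * segSup hM (fun τ => φ τ - ψ τ)

def HistoryContinuous (hM : ℝ) (f : (Fin r → ℝ) → (ℝ → E) → E) : Prop :=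
  Continuous fun p : (Fin r → ℝ) × C(Icc (-hM) (0:ℝ), E) =>
    f p.1 (fun τ => if h : τ ∈ Icc (-hM) (0:ℝ) then p.2 ⟨τ, h⟩ else 0)

variable {hM L : ℝ} {A : Set (Fin r → ℝ)}
  {f : (Fin r → ℝ) → (ℝ → EuclideanSpace ℝ (Fin n)) → EuclideanSpace ℝ (Fin n)}
  {ζ : ℝ → Fin r → ℝ} {x₀ x : ℝ → EuclideanSpace ℝ (Fin n)}

lemma HistoryLipschitzOn.eq_of_eqOn (hf : HistoryLipschitzOn hM L A f) {ξ : Fin r → ℝ}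
    (hξ : ξ ∈ A) {φ ψ : ℝ → E} (h : EqOn φ ψ (Icc (-hM) 0)) : f ξ φ = f ξ ψ := by
  have hsup : segSup hM (fun τ => φ τ - ψ τ) = 0 :=
    (segSup_le le_rfl fun τ hτ => by simp [h hτ]).antisymm (segSup_nonneg _ _)
  rw [← sub_eq_zero, ← norm_le_zero_iff]
  simpa [hsup] using hf ξ hξ φ ψ

lemma HistoryLipschitzOn.norm_le (hf : HistoryLipschitzOn hM L A f)
    (hf₀ : ∀ ξ ∈ A, f ξ (fun _ => 0) = 0) {ξ : Fin r → ℝ} (hξ : ξ ∈ A) (φ : ℝ → E) :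
    ‖f ξ φ‖ ≤ L * segSup hM φ := by
  simpa [hf₀ ξ hξ] using hf ξ hξ φ (fun _ => 0)

lemma HistoryContinuous.continuousOn_seg (hc : HistoryContinuous hM f)
    (hf : HistoryLipschitzOn hM L A f) (hζ : Continuous ζ) (hζA : ∀ t ≥ 0, ζ t ∈ A)
    (hx : ContinuousOn x (Ici (-hM))) :
    ContinuousOn (fun t => f (ζ t) (seg x t)) (Ici 0) := by
  set x' : ℝ → E := fun t => x (max t (-hM))
  have hx' : Continuous x' :=
    hx.comp_continuous (by fun_prop) fun t => mem_Ici.2 (le_max_right _ _)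
  let U : C(ℝ × Icc (-hM) (0:ℝ), E) := ⟨fun p => x' (p.1 + p.2), by fun_prop⟩
  refine (hc.comp (hζ.prodMk U.curry.continuous)).continuousOn.congr fun t ht => ?_
  refine hf.eq_of_eqOn (hζA t ht) fun τ hτ => ?_
  have : -hM ≤ t + τ := by linarith [mem_Ici.1 ht, hτ.1]
  simp [seg, hτ, U, x', max_eq_left this]

lemma IsSolution.of_integral_eq (hx : ContinuousOn x (Ici (-hM))) (hx₀ : EqOn x x₀ (Icc (-hM) 0))
    (hG : ContinuousOn (fun t => f (ζ t) (seg x t)) (Ici 0))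
    (hint : ∀ t ≥ 0, x t = x 0 + ∫ s in 0..t, f (ζ s) (seg x s)) :
    IsSolution hM f ζ x₀ x := by
  refine ⟨hx, hx₀, fun t ht => ?_⟩
  have hGt : ContinuousOn (fun t => f (ζ t) (seg x t)) (Ici t) := hG.mono fun s hs => ht.trans hs
  have hint0 : IntervalIntegrable (fun s => f (ζ s) (seg x s)) volume 0 t :=
    (hG.mono fun s hs => by rw [uIcc_of_le ht] at hs; exact hs.1).intervalIntegrable
  have hderiv := integral_hasDerivWithinAt_right (s := Ici t) (t := Ioi t) hint0
    ((hGt.mono Ioi_subset_Ici_self).stronglyMeasurableAtFilter_nhdsWithin measurableSet_Ioi t)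
    ((hGt t self_mem_Ici).mono Ioi_subset_Ici_self)
  exact (hderiv.const_add (x 0)).congr (fun s hs => hint s (ht.trans hs)) (hint t ht)

namespace IsSolution

lemma integral_eq (hx : IsSolution hM f ζ x₀ x) (hhM : 0 ≤ hM)
    (hG : ContinuousOn (fun t => f (ζ t) (seg x t)) (Ici 0)) {a b : ℝ} (ha : 0 ≤ a) (hab : a ≤ b) :
    ∫ s in a..b, f (ζ s) (seg x s) = x b - x a := by
  refine integral_eq_sub_of_hasDeriv_right_of_le hab ?_ ?_ ?_
  · exact hx.1.mono fun s hs => show -hM ≤ s by linarith [hs.1]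
  · exact fun s hs => (hx.2.2 s (by linarith [hs.1])).mono Ioi_subset_Ici_self
  · refine (hG.mono fun s hs => ?_).intervalIntegrable
    rw [uIcc_of_le hab] at hs
    exact ha.trans hs.1

lemma comp_add (hx : IsSolution hM f ζ x₀ x) {a : ℝ} (ha : 0 ≤ a) :
    IsSolution hM f (fun s => ζ (s + a)) (fun s => x (s + a)) (fun s => x (s + a)) := by
  refine ⟨hx.1.comp (by fun_prop) fun s hs => ?_, fun _ _ => rfl, fun t ht => ?_⟩
  · exact show -hM ≤ s + a by linarith [mem_Ici.1 hs]
  · have hshift : HasDerivWithinAt (fun s => s + a) 1 (Ici t) t :=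
      (hasDerivWithinAt_id t _).add_const a
    have := (hx.2.2 (t + a) (by linarith)).scomp t hshift fun s hs => by
      simp only [mem_Ici] at hs ⊢; linarith
    have hseg : seg (fun s => x (s + a)) t = seg x (t + a) := funext fun τ => by
      simp only [seg, add_right_comm]
    rw [hseg, ← one_smul ℝ (f _ _)]
    exact this

lemma inW_comp_add (hx : IsSolution hM f ζ x₀ x) (hhM : 0 ≤ hM)
    (hG : ContinuousOn (fun t => f (ζ t) (seg x t)) (Ici 0)) {a : ℝ} (ha : hM ≤ a) :
    InW hM (fun s => x (s + a)) (fun s => f (ζ (s + a)) (seg x (s + a))) := by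
  have hmaps : MapsTo (fun s => s + a) (Icc (-hM) 0) (Ici 0) :=
    fun s hs => show 0 ≤ s + a by linarith [hs.1]
  have hGa : ContinuousOn (fun s => f (ζ (s + a)) (seg x (s + a))) (Icc (-hM) 0) :=
    hG.comp (by fun_prop) hmaps
  refine ⟨hx.1.comp (by fun_prop) fun s hs => ?_, hGa.integrableOn_Icc, fun t ht => ?_,
    (hGa.norm.pow 2).integrableOn_Icc⟩
  · exact show -hM ≤ s + a by linarith [hs.1]
  · rw [intervalIntegral.integral_comp_add_right (fun s => f (ζ s) (seg x s)) a, zero_add,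
      hx.integral_eq hhM hG (hmaps ht) (by linarith [ht.2])]
    simp

lemma norm_le_segSup_mul_exp (hx : IsSolution hM f ζ x₀ x) (hf : HistoryLipschitzOn hM L A f)
    (hf₀ : ∀ ξ ∈ A, f ξ (fun _ => 0) = 0) (hζA : ∀ t ≥ 0, ζ t ∈ A) (hL : 0 ≤ L) (hhM : 0 ≤ hM)
    (hx₀ : ContinuousOn x₀ (Icc (-hM) 0)) :
    ∀ T ≥ 0, ∀ u ∈ Icc (-hM) T, ‖x u‖ ≤ segSup hM x₀ * exp (L * T) :=
  norm_le_mul_exp_on_Icc_of_norm_deriv_le_segSup hL hx.1 hx.2.2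
    (fun t ht => hf.norm_le hf₀ (hζA t ht) _)
    (fun τ hτ => (hx.2.1 τ hτ).symm ▸ le_segSup hx₀ hτ) hhM

lemma norm_sub_le {p₁ p₂ x₁ x₂ : ℝ → EuclideanSpace ℝ (Fin n)} (hx₁ : IsSolution hM f ζ p₁ x₁)
    (hx₂ : IsSolution hM f ζ p₂ x₂) (hf : HistoryLipschitzOn hM L A f) (hζA : ∀ t ≥ 0, ζ t ∈ A)
    (hL : 0 ≤ L) (hhM : 0 ≤ hM) {δ : ℝ} (hδ : ∀ τ ∈ Icc (-hM) 0, ‖p₁ τ - p₂ τ‖ ≤ δ) :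
    ∀ T ≥ 0, ∀ u ∈ Icc (-hM) T, ‖x₁ u - x₂ u‖ ≤ δ * exp (L * T) :=
  norm_le_mul_exp_on_Icc_of_norm_deriv_le_segSup hL (hx₁.1.sub hx₂.1)
    (fun t ht => (hx₁.2.2 t ht).sub (hx₂.2.2 t ht)) (fun t ht => hf _ (hζA t ht) _ _)
    (fun τ hτ => by simpa [hx₁.2.1 τ hτ, hx₂.2.1 τ hτ] using hδ τ hτ) hhM

lemma Wnorm_comp_add_le (hx : IsSolution hM f ζ x₀ x) (hf : HistoryLipschitzOn hM L A f)
    (hf₀ : ∀ ξ ∈ A, f ξ (fun _ => 0) = 0) (hζA : ∀ t ≥ 0, ζ t ∈ A) (hL : 0 ≤ L) (hhM : 0 ≤ hM)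
    (hx₀ : ContinuousOn x₀ (Icc (-hM) 0))
    (hG : ContinuousOn (fun t => f (ζ t) (seg x t)) (Ici 0)) :
    Wnorm hM (fun s => x (s + hM)) (fun s => f (ζ (s + hM)) (seg x (s + hM))) ≤
      exp (L * hM) * segSup hM x₀ * √(1 + hM * L ^ 2) := by
  set M := segSup hM x₀ * exp (L * hM)
  have hM₀ : 0 ≤ M := mul_nonneg (segSup_nonneg _ _) (exp_pos _).le
  have hbound := hx.norm_le_segSup_mul_exp hf hf₀ hζA hL hhM hx₀ hM hhM
  have hG_le : ∀ s ∈ Icc (-hM) 0, ‖f (ζ (s + hM)) (seg x (s + hM))‖ ≤ L * M := fun s hs =>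
    (hf.norm_le hf₀ (hζA _ (by linarith [hs.1])) _).trans <| mul_le_mul_of_nonneg_left
      (segSup_le hM₀ fun τ hτ => hbound _ ⟨by linarith [hs.1, hτ.1], by linarith [hs.2, hτ.2]⟩) hL
  calc _ ≤ √(M ^ 2 + hM * (L * M) ^ 2) := Wnorm_le hhM (hx.inW_comp_add hhM hG le_rfl)
        (by simpa using hbound hM ⟨by linarith, le_rfl⟩) hG_le
    _ = exp (L * hM) * segSup hM x₀ * √(1 + hM * L ^ 2) := by
        rw [show M ^ 2 + hM * (L * M) ^ 2 = M ^ 2 * (1 + hM * L ^ 2) by ring,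
          sqrt_mul (sq_nonneg _), sqrt_sq hM₀]
        ring

end IsSolution

lemma HistoryLipschitzOn.tendstoUniformlyOn_seg (hf : HistoryLipschitzOn hM L A f) (hL : 0 ≤ L)
    (hζA : ∀ t ≥ 0, ζ t ∈ A) {X : ℕ → ℝ → EuclideanSpace ℝ (Fin n)}
    {Y : ℝ → EuclideanSpace ℝ (Fin n)} {T : ℝ} (hXY : TendstoUniformlyOn X Y atTop (Icc (-hM) T)) :
    TendstoUniformlyOn (fun k t => f (ζ t) (seg (X k) t)) (fun t => f (ζ t) (seg Y t)) atTop
      (Icc 0 T) := by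
  rw [Metric.tendstoUniformlyOn_iff] at hXY ⊢
  intro ε hε
  filter_upwards [hXY (ε / (L + 1)) (by positivity)] with k hk t ht
  rw [dist_eq_norm]
  calc ‖f (ζ t) (seg Y t) - f (ζ t) (seg (X k) t)‖ ≤ L * (ε / (L + 1)) := by
        refine (hf _ (hζA t ht.1) _ _).trans (mul_le_mul_of_nonneg_left ?_ hL)
        refine segSup_le (by positivity) fun τ hτ => ?_
        rw [← dist_eq_norm]
        exact (hk _ ⟨by linarith [ht.1, hτ.1], by linarith [ht.2, hτ.2]⟩).le
    _ < ε := by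
      rw [mul_div_assoc', div_lt_iff₀ (by positivity)]
      nlinarith

lemma IsSolution.of_tendstoUniformlyOn (hc : HistoryContinuous hM f)
    (hf : HistoryLipschitzOn hM L A f) (hζ : Continuous ζ) (hζA : ∀ t ≥ 0, ζ t ∈ A) (hL : 0 ≤ L)
    (hhM : 0 ≤ hM) {p X : ℕ → ℝ → EuclideanSpace ℝ (Fin n)} {Y : ℝ → EuclideanSpace ℝ (Fin n)}
    (hX : ∀ k, IsSolution hM f ζ (p k) (X k))
    (hXY : ∀ T, TendstoUniformlyOn X Y atTop (Icc (-hM) T))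
    (hp : TendstoUniformlyOn p x₀ atTop (Icc (-hM) 0)) : IsSolution hM f ζ x₀ Y := by
  have hY : ContinuousOn Y (Ici (-hM)) := fun u hu => by
    have hYT := (hXY (u + 1)).continuousOn
      (Frequently.of_forall fun k => (hX k).1.mono Icc_subset_Ici_self)
    refine (hYT u ⟨hu, by linarith⟩).mono_of_mem_nhdsWithin ?_
    rw [← Ici_inter_Iic]
    exact inter_mem self_mem_nhdsWithin (mem_nhdsWithin_of_mem_nhds (Iic_mem_nhds (by linarith)))
  have hG := hc.continuousOn_seg hf hζ hζA hY
  refine IsSolution.of_integral_eq hY (fun τ hτ => ?_) hG fun t ht => ?_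
  · refine tendsto_nhds_unique ((hXY 0).tendsto_at hτ) ?_
    simpa only [(hX _).2.1 τ hτ] using hp.tendsto_at hτ
  · have hint : ∀ k, X k t = X k 0 + ∫ s in 0..t, f (ζ s) (seg (X k) s) := fun k => by
      rw [(hX k).integral_eq hhM (hc.continuousOn_seg hf hζ hζA (hX k).1) le_rfl ht,
        add_sub_cancel]
    refine tendsto_nhds_unique ((hXY t).tendsto_at ⟨by linarith, le_rfl⟩) ?_
    simp only [hint]
    refine ((hXY t).tendsto_at ⟨by linarith, ht⟩).add ?_
    refine TendstoUniformlyOn.tendsto_intervalIntegral_of_continuousOn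
      (Eventually.of_forall fun k => ?_) ?_
    · exact (hc.continuousOn_seg hf hζ hζA (hX k).1).mono fun s hs => by
        rw [uIcc_of_le ht] at hs; exact hs.1
    · rw [uIcc_of_le ht]
      exact hf.tendstoUniformlyOn_seg hL hζA (hXY t)

theorem exists_isSolution (hc : HistoryContinuous hM f) (hf : HistoryLipschitzOn hM L A f)
    (hζ : Continuous ζ) (hζA : ∀ t ≥ 0, ζ t ∈ A) (hL : 0 ≤ L) (hhM : 0 ≤ hM)
    (hW : ∀ p g, InW hM p g → ∃ x, IsSolution hM f ζ p x) (hx₀ : ContinuousOn x₀ (Icc (-hM) 0)) :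
    ∃ x, IsSolution hM f ζ x₀ x := by
  obtain ⟨p, g, hpg, hp⟩ := exists_seq_inW_tendstoUniformlyOn hx₀
  choose X hX using fun k => hW (p k) (g k) (hpg k)
  have hcauchy : ∀ T, UniformCauchySeqOn X atTop (Icc (-hM) T) := fun T =>
    hp.uniformCauchySeqOn.of_dist_le_mul fun k l ε hε u hu => by
      simp only [dist_eq_norm] at hε ⊢
      exact (hX k).norm_sub_le (hX l) hf hζA hL hhM hε (max T 0) (le_max_right _ _) u
        ⟨hu.1, hu.2.trans (le_max_left _ _)⟩ |>.trans_eq (mul_comm _ _)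
  refine ⟨fun u => limUnder atTop fun k => X k u, ?_⟩
  refine IsSolution.of_tendstoUniformlyOn hc hf hζ hζA hL hhM hX (fun T => ?_) hp
  exact (hcauchy T).tendstoUniformlyOn_of_tendsto fun u hu =>
    ((hcauchy T).cauchySeq hu).tendsto_limUnder

end

/-- exponential stability transfer. If the system is
`(W,H)`-globally exponentially stable with constants `C₀, κ > 0`, `f` is globally
Lipschitz with constant `L` in the second argument uniformly in the first with
`f(·,0)=0`, and `H` is forward invariant, then it is `(C⁰,H)`-globally
exponentially stable with decay rate `κ` and constant
`C̃₀ = max((1+e^{L h_M}) e^{κ h_M}, C₀ e^{κ h_M} (1+e^{L h_M}) √(1+h_M L²))`. -/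
theorem W_exp_stability_implies_C0_exp_stability {n r : ℕ} (hM L C₀ κ : ℝ)
    (hhM : 0 < hM) (hL : 0 < L) (hC₀ : 0 < C₀) (hκ : 0 < κ)
    (A : Set (Fin r → ℝ))
    (f : (Fin r → ℝ) → (ℝ → EuclideanSpace ℝ (Fin n)) → EuclideanSpace ℝ (Fin n))
    (hfcont : Continuous fun p : (Fin r → ℝ) × C(Set.Icc (-hM) (0:ℝ), EuclideanSpace ℝ (Fin n)) =>
      f p.1 (fun τ => if h : τ ∈ Set.Icc (-hM) (0:ℝ) then p.2 ⟨τ, h⟩ else 0))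
    (hf0 : ∀ ξ ∈ A, f ξ (fun _ => 0) = 0)
    (hfLip : ∀ ξ ∈ A, ∀ φ ψ : ℝ → EuclideanSpace ℝ (Fin n),
      ‖f ξ φ - f ξ ψ‖ ≤ L * segSup hM (fun τ => φ τ - ψ τ))
    (H : Set (ℝ → Fin r → ℝ)) (hHfi : FwdInv H)
    (hHcont : ∀ ζ ∈ H, Continuous ζ) (hHA : ∀ ζ ∈ H, ∀ t ≥ (0:ℝ), ζ t ∈ A)
    (hWexp : ∀ x₀ g, InW hM x₀ g → ∀ ζ ∈ H,
      (∃ x, IsSolution hM f ζ x₀ x) ∧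
      ∀ x, IsSolution hM f ζ x₀ x → ∀ t ≥ (0:ℝ),
        ‖x t‖ ≤ C₀ * Real.exp (-κ * t) * Wnorm hM x₀ g) :
    ∀ x₀ : ℝ → EuclideanSpace ℝ (Fin n), ContinuousOn x₀ (Set.Icc (-hM) 0) →
      ∀ ζ ∈ H,
        (∃ x, IsSolution hM f ζ x₀ x) ∧
        ∀ x, IsSolution hM f ζ x₀ x → ∀ t ≥ (0:ℝ),
          ‖x t‖ ≤ max ((1 + Real.exp (L * hM)) * Real.exp (κ * hM))
              (C₀ * Real.exp (κ * hM) * (1 + Real.exp (L * hM)) *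
                Real.sqrt (1 + hM * L ^ 2)) *
            Real.exp (-κ * t) * segSup hM x₀ := by
  intro x₀ hx₀ ζ hζ
  have hζA := hHA ζ hζ
  refine ⟨exists_isSolution hfcont hfLip (hHcont ζ hζ) hζA hL.le hhM.le
    (fun p g hpg => (hWexp p g hpg ζ hζ).1) hx₀, fun x hx => ?_⟩
  have hG := HistoryContinuous.continuousOn_seg hfcont hfLip (hHcont ζ hζ) hζA hx.1
  have hbound := hx.norm_le_segSup_mul_exp hfLip hf0 hζA hL.le hhM.le hx₀ hM hhM.le
  -- past one delay, `x` is the solution issued from its own segment `x_{h_M} ∈ W`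
  have hlate := (hWexp _ _ (hx.inW_comp_add hhM.le hG le_rfl) _ (hHfi ζ hζ hM hhM)).2 _
    (hx.comp_add hhM.le)
  exact norm_le_max_mul_exp_of_delay_bounds hC₀.le hκ.le (segSup_nonneg _ _)
    (fun t ht => hbound t ⟨by linarith [ht.1], ht.2⟩) hlate
    (hx.Wnorm_comp_add_le hfLip hf0 hζA hL.le hhM.le hx₀ hG)
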